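/- arXiv:2006.13679 — 3 statements merged into one kernel-verified Lean document; each statement's English description precedes it below -/
import Mathlib

section
/- Let n ≥ 1, let L be a real n×n symmetric matrix with L·𝟙 = 0 whose kernel is exactly the span of 𝟙, and let J be the n×n all-ones matrix. Then the matrix L + (1/n)·J is invertible, and the matrix L⁺ := (L + (1/n)·J)⁻¹ − (1/n)·J satisfies the four Penrose equations for L: L L⁺ L = L, L⁺ L L⁺ = L⁺, (L L⁺)ᵀ = L L⁺, and (L⁺ L)ᵀ = L⁺ L. In particular, L⁺ is a Moore–Penrose pseudoinverse of L. -/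
open Matrix

/-- The all-ones `n × n` matrix. -/
def allOnes (n : ℕ) : Matrix (Fin n) (Fin n) ℝ := Matrix.of fun _ _ => (1 : ℝ)

/-- `Lp` satisfies the four Penrose equations for `L`. -/
def IsPenrosePseudoinverse {n : ℕ} (L Lp : Matrix (Fin n) (Fin n) ℝ) : Prop :=
  L * Lp * L = L ∧ Lp * L * Lp = Lp ∧ (L * Lp)ᵀ = L * Lp ∧ (Lp * L)ᵀ = Lp * L

theorem pinv_formula_is_moore_penrose (n : ℕ) (hn : 1 ≤ n)
    (L : Matrix (Fin n) (Fin n) ℝ)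
    (hsym : L.IsSymm)
    (hL1 : L.mulVec (fun _ => (1 : ℝ)) = 0)
    (hker : ∀ x : Fin n → ℝ, L.mulVec x = 0 → (∑ i, x i) = 0 → x = 0) :
    IsUnit (L + ((n : ℝ))⁻¹ • allOnes n) ∧
    IsPenrosePseudoinverse L ((L + ((n : ℝ))⁻¹ • allOnes n)⁻¹ - ((n : ℝ))⁻¹ • allOnes n) := by
  have hn0 : (n : ℝ) ≠ 0 := Nat.cast_ne_zero.mpr (by omega)
  set c : ℝ := ((n : ℝ))⁻¹ with hc
  set J : Matrix (Fin n) (Fin n) ℝ := allOnes n with hJ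
  set M : Matrix (Fin n) (Fin n) ℝ := L + c • J with hM
  -- row sums of L are zero
  have hrow : ∀ i, ∑ k, L i k = 0 := by
    intro i
    have := congrFun hL1 i
    simpa [Matrix.mulVec, dotProduct] using this
  have hLJ : L * J = 0 := by
    ext i j
    simp [hJ, allOnes, Matrix.mul_apply, hrow i]
  have hJL : J * L = 0 := by
    have : (J * L)ᵀ = 0 := by
      rw [Matrix.transpose_mul, hsym.eq]
      have : Jᵀ = J := by ext i j; simp [hJ, allOnes]
      rw [this, hLJ]
    calc J * L = ((J * L)ᵀ)ᵀ := by rw [Matrix.transpose_transpose]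
    _ = 0 := by rw [this]; simp
  have hJJ : J * J = (n : ℝ) • J := by
    ext i j
    simp [hJ, allOnes, Matrix.mul_apply, Finset.sum_const]
  have hcn : c * (n : ℝ) = 1 := inv_mul_cancel₀ hn0
  have hMJ : M * J = J := by
    rw [hM, Matrix.add_mul, hLJ, Matrix.smul_mul, hJJ, zero_add, smul_smul, hcn, one_smul]
  have hJM : J * M = J := by
    rw [hM, Matrix.mul_add, hJL, Matrix.mul_smul, hJJ, zero_add, smul_smul, hcn, one_smul]
  -- invertibility of M
  have hdet : M.det ≠ 0 := by
    intro hd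
    obtain ⟨v, hv, hMv⟩ := (Matrix.exists_mulVec_eq_zero_iff).mpr hd
    -- sum of v is zero
    have hJv : J.mulVec v = fun _ => ∑ k, v k := by
      ext i; simp [hJ, allOnes, Matrix.mulVec, dotProduct]
    have hMv' : L.mulVec v + c • (J.mulVec v) = 0 := by
      have := hMv
      rw [hM, Matrix.add_mulVec, Matrix.smul_mulVec] at this
      exact this
    have hdot : dotProduct (fun _ => (1 : ℝ)) (M.mulVec v) = 0 := by
      rw [hMv]; simp [dotProduct]
    have hvecMul : Matrix.vecMul (fun _ => (1 : ℝ)) L = 0 := by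
      rw [← Matrix.mulVec_transpose, hsym.eq, hL1]
    have hdotL : dotProduct (fun _ => (1 : ℝ)) (L.mulVec v) = 0 := by
      rw [Matrix.dotProduct_mulVec, hvecMul]
      simp [dotProduct]
    have hsum : ∑ k, v k = 0 := by
      have h1 : dotProduct (fun _ => (1 : ℝ)) (L.mulVec v + c • J.mulVec v) = 0 := by
        have := hdot
        rw [hM, Matrix.add_mulVec, Matrix.smul_mulVec] at this
        exact this
      rw [dotProduct_add, hdotL, zero_add, dotProduct_smul, hJv] at h1
      have h2 : dotProduct (fun _ : Fin n => (1 : ℝ)) (fun _ => ∑ k, v k)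
          = (n : ℝ) * ∑ k, v k := by
        simp [dotProduct, Finset.sum_const, mul_comm]
      rw [h2] at h1
      have : c * ((n : ℝ) * ∑ k, v k) = c * (n:ℝ) * ∑ k, v k := by ring
      rw [smul_eq_mul, this, hcn, one_mul] at h1
      exact h1
    have hJv0 : J.mulVec v = 0 := by
      rw [hJv]; ext i; simp [hsum]
    have hLv : L.mulVec v = 0 := by
      rw [hJv0, smul_zero, add_zero] at hMv'
      exact hMv'
    exact hv (hker v hLv hsum)
  have hUnit : IsUnit M := by
    rw [Matrix.isUnit_iff_isUnit_det]
    exact isUnit_iff_ne_zero.mpr hdet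
  have hMinv : M * M⁻¹ = 1 := Matrix.mul_nonsing_inv M (isUnit_iff_ne_zero.mpr hdet)
  have hinvM : M⁻¹ * M = 1 := Matrix.nonsing_inv_mul M (isUnit_iff_ne_zero.mpr hdet)
  have hJMi : J * M⁻¹ = J := by
    calc J * M⁻¹ = (J * M) * M⁻¹ := by rw [hJM]
    _ = J * (M * M⁻¹) := by rw [Matrix.mul_assoc]
    _ = J := by rw [hMinv, Matrix.mul_one]
  have hMiJ : M⁻¹ * J = J := by
    calc M⁻¹ * J = M⁻¹ * (M * J) := by rw [hMJ]
    _ = (M⁻¹ * M) * J := by rw [Matrix.mul_assoc]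
    _ = J := by rw [hinvM, Matrix.one_mul]
  set Lp : Matrix (Fin n) (Fin n) ℝ := M⁻¹ - c • J with hLp
  have hJLp : J * Lp = 0 := by
    rw [hLp, Matrix.mul_sub, hJMi, Matrix.mul_smul, hJJ, smul_smul, hcn, one_smul, sub_self]
  have hLpJ : Lp * J = 0 := by
    rw [hLp, Matrix.sub_mul, hMiJ, Matrix.smul_mul, hJJ, smul_smul, hcn, one_smul, sub_self]
  have hLeq : L = M - c • J := by rw [hM]; rw [add_sub_cancel_right]
  have hLLp : L * Lp = 1 - c • J := by
    rw [hLeq, Matrix.sub_mul, Matrix.smul_mul, hJLp, smul_zero, sub_zero,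
      hLp, Matrix.mul_sub, hMinv, Matrix.mul_smul, hMJ]
  have hLpL : Lp * L = 1 - c • J := by
    rw [hLeq, Matrix.mul_sub, Matrix.mul_smul, hLpJ, smul_zero, sub_zero,
      hLp, Matrix.sub_mul, hinvM, Matrix.smul_mul, hJM]
  have hJT : Jᵀ = J := by ext i j; simp [hJ, allOnes]
  refine ⟨hUnit, ?_, ?_, ?_, ?_⟩
  · rw [hLLp, Matrix.sub_mul, Matrix.one_mul, Matrix.smul_mul, hJL, smul_zero, sub_zero]
  · rw [Matrix.mul_assoc, hLLp, Matrix.mul_sub, Matrix.mul_one, Matrix.mul_smul, hLpJ,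
      smul_zero, sub_zero]
  · rw [hLLp, Matrix.transpose_sub, Matrix.transpose_one, Matrix.transpose_smul, hJT]
  · rw [hLpL, Matrix.transpose_sub, Matrix.transpose_one, Matrix.transpose_smul, hJT]
end

section
/- Let G be a finite connected simple graph, let s ≠ t be vertices, let N > 0 be the number of spanning trees of G, and for adjacent vertices a, b let N_{s,t}(a,b) be the number of spanning trees T of G in which the unique path from s to t in T traverses the edge {a,b} in the direction from a to b. Define f(a,b) := (N_{s,t}(a,b) − N_{s,t}(b,a))/N for each ordered pair of adjacent vertices. Then f is a unit electrical flow from s to t satisfying the Kirchhoff laws: (i) (current law) for every vertex v, ∑_{b adjacent to v} f(v,b) equals 1 if v = s, equals −1 if v = t, and equals 0 otherwise; and (ii) (voltage law, for unit resistances) for every closed walk v₀, v₁, …, v_k = v₀ in G, ∑_{i=0}^{k−1} f(v_i, v_{i+1}) = 0. -/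
open SimpleGraph

variable {V : Type*}

/-- `T` is a spanning tree of `G`. -/
def IsSpanningTreeOf (T G : SimpleGraph V) : Prop := T ≤ G ∧ T.IsTree

/-- The unique path from `s` to `t` in the tree `T` traverses the edge `{a,b}`
in the direction from `a` to `b`. -/
def PathTraverses (T : SimpleGraph V) (s t a b : V) : Prop :=
  ∃ p : T.Walk s t, p.IsPath ∧ ∃ d ∈ p.darts, d.toProd = (a, b)

/-!
Each spanning tree `T` contributes to `N • f` the unit flow along its `s`–`t` path, whose
divergence at `v` is `[v = s] - [v = t]`; summing over `T` gives the current law.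

For the voltage law, deleting the edge `ab` from a spanning tree whose `s`–`t` path runs from `a`
to `b` is a bijection onto the spanning forests with two trees, the tree of `s` containing `a` and
the tree of `t` containing `b`. Hence `N_{s,t}(a,b) - N_{s,t}(b,a) = φ a - φ b`, where `φ x`
counts the two-tree forests separating `s` from `t` in which `x` lies in the tree of `s`. So
`N • f` is a potential difference, and it sums to zero around every closed walk.
-/

open Finset

namespace SimpleGraph

theorem Walk.sum_count_darts_sub_count_darts [Fintype V] [DecidableEq V] {G H : SimpleGraph V}
    [DecidableRel G.Adj] (hHG : H ≤ G) {u v : V} (p : H.Walk u v) (x : V) :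
    ∑ b ∈ univ.filter (G.Adj x ·),
      (((p.darts.map Dart.toProd).count (x, b) : ℤ) - (p.darts.map Dart.toProd).count (b, x)) =
      (if x = u then 1 else 0) - if x = v then 1 else 0 := by
  induction p with
  | nil => simp
  | @cons u c v h q ih =>
    have hout : ∑ b ∈ univ.filter (G.Adj x ·), (if (u, c) = (x, b) then 1 else 0 : ℤ) =
        if x = u then 1 else 0 := by
      by_cases hx : x = u
      · subst hx; simp [hHG h]
      · rw [if_neg hx]
        exact sum_eq_zero fun b _ => if_neg fun h => hx (congrArg Prod.fst h).symm
    have hin : ∑ b ∈ univ.filter (G.Adj x ·), (if (u, c) = (b, x) then 1 else 0 : ℤ) =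
        if x = c then 1 else 0 := by
      by_cases hx : x = c
      · subst hx; simp [(hHG h).symm]
      · rw [if_neg hx]
        exact sum_eq_zero fun b _ => if_neg fun h => hx (congrArg Prod.snd h).symm
    simp only [Walk.darts_cons, List.map_cons, List.count_cons, beq_iff_eq, Nat.cast_add,
      Nat.cast_ite, Nat.cast_one, Nat.cast_zero]
    simp only [add_sub_add_comm, sum_add_distrib, sum_sub_distrib] at ih ⊢
    rw [ih, hout, hin]
    ring

theorem Walk.sum_map_darts_eq_sub {G : SimpleGraph V} {M : Type*} [AddCommGroup M]
    {f : V → V → M} {φ : V → M} (hf : ∀ a b, G.Adj a b → f a b = φ a - φ b) {u v : V}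
    (p : G.Walk u v) :
    (p.darts.map fun d => f d.toProd.1 d.toProd.2).sum = φ u - φ v := by
  induction p with
  | nil => simp
  | cons h q ih =>
    rw [Walk.darts_cons, List.map_cons, List.sum_cons, ih, hf _ _ h]
    abel

theorem Reachable.reachable_deleteEdges_or {H : SimpleGraph V} {a b v : V}
    (h : H.Reachable a v) :
    (H.deleteEdges {s(a, b)}).Reachable a v ∨ (H.deleteEdges {s(a, b)}).Reachable b v := by
  rw [reachable_iff_reflTransGen] at h
  induction h with
  | refl => exact .inl .rfl
  | @tail x y _ hxy ih =>
    by_cases he : s(x, y) = s(a, b)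
    · rcases Sym2.eq_iff.mp he with ⟨-, rfl⟩ | ⟨-, rfl⟩
      · exact .inr .rfl
      · exact .inl .rfl
    · have hxy' : (H.deleteEdges {s(a, b)}).Adj x y := by simp [hxy, he]
      exact ih.imp (·.trans hxy'.reachable) (·.trans hxy'.reachable)

theorem Walk.IsTrail.reachable_deleteEdges_of_mem_darts {H : SimpleGraph V} {u v : V}
    {p : H.Walk u v} (hp : p.IsTrail) {d : H.Dart} (hd : d ∈ p.darts) :
    (H.deleteEdges {d.edge}).Reachable u d.fst ∧
      (H.deleteEdges {d.edge}).Reachable d.snd v := by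
  induction p with
  | nil => simp at hd
  | @cons u c v h q ih =>
    rw [Walk.isTrail_cons] at hp
    rcases List.mem_cons.mp hd with rfl | hd
    · exact ⟨.rfl, ⟨q.toDeleteEdges _ fun e he => by
        simpa using ne_of_mem_of_not_mem he hp.2⟩⟩
    · have hne : s(u, c) ≠ d.edge :=
        fun he => hp.2 (he ▸ q.edges_eq_map_darts ▸ List.mem_map_of_mem hd)
      have huc : (H.deleteEdges {d.edge}).Adj u c := by simp [h, hne]
      exact (ih hp.1 hd).imp_left huc.reachable.trans

theorem deleteEdges_sup_edge {T : SimpleGraph V} {a b : V} (hab : T.Adj a b) :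
    T.deleteEdges {s(a, b)} ⊔ edge a b = T := by
  ext x y
  simp only [sup_adj, deleteEdges_adj, Set.mem_singleton_iff, adj_edge]
  grind [adj_congr_of_sym2, Adj.ne]

theorem sup_edge_deleteEdges {F : SimpleGraph V} {a b : V} (hab : ¬F.Adj a b) :
    (F ⊔ edge a b).deleteEdges {s(a, b)} = F := by
  simp [deleteEdges_sup, hab]

theorem IsTree.pathTraverses_iff {T : SimpleGraph V} (hT : T.IsTree) {s t a b : V}
    {p : T.Walk s t} (hp : p.IsPath) :
    PathTraverses T s t a b ↔ (a, b) ∈ p.darts.map Dart.toProd := by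
  refine ⟨fun ⟨q, hq, d, hd, hdab⟩ => ?_, fun h => ?_⟩
  · obtain rfl : q = p :=
      congrArg Subtype.val ((hT.isAcyclic.subsingleton_path s t).elim ⟨q, hq⟩ ⟨p, hp⟩)
    exact List.mem_map.mpr ⟨d, hd, hdab⟩
  · obtain ⟨d, hd, hdab⟩ := List.mem_map.mp h
    exact ⟨p, hp, d, hd, hdab⟩

structure IsSeparatingForest (G : SimpleGraph V) (s t : V) (F : SimpleGraph V) : Prop where
  le : F ≤ G
  isAcyclic : F.IsAcyclic
  not_reachable : ¬F.Reachable s t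
  reachable_or : ∀ v, F.Reachable s v ∨ F.Reachable t v

end SimpleGraph

section

variable {G T F : SimpleGraph V} {s t a b : V}

open Classical in
variable (s t) in
theorem IsSpanningTreeOf.sum_ite_pathTraverses_sub [Fintype V] [DecidableEq V]
    [DecidableRel G.Adj] (hT : IsSpanningTreeOf T G) (v : V) :
    ∑ b ∈ univ.filter (G.Adj v ·),
      ((if PathTraverses T s t v b then 1 else 0 : ℤ) -
        if PathTraverses T s t b v then 1 else 0) =
      (if v = s then 1 else 0) - if v = t then 1 else 0 := by
  obtain ⟨p, hp, -⟩ := hT.2.existsUnique_path s t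
  have hnodup : (p.darts.map Dart.toProd).Nodup :=
    (Walk.darts_nodup_of_support_nodup hp.support_nodup).map Dart.toProd_injective
  have hdiv := p.sum_count_darts_sub_count_darts hT.1 v
  simp only [hnodup.count, Nat.cast_ite, Nat.cast_one, Nat.cast_zero] at hdiv
  simpa only [hT.2.pathTraverses_iff hp] using hdiv

open Classical in
variable (G s t) in
theorem sum_ncard_pathTraverses_sub [Fintype V] [DecidableEq V] [DecidableRel G.Adj] (v : V) :
    ∑ b ∈ univ.filter (G.Adj v ·),
      (({T | IsSpanningTreeOf T G ∧ PathTraverses T s t v b}.ncard : ℤ) -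
        {T | IsSpanningTreeOf T G ∧ PathTraverses T s t b v}.ncard) =
      ((if v = s then 1 else 0) - if v = t then 1 else 0) * {T | IsSpanningTreeOf T G}.ncard := by
  simp only [Set.ncard_eq_toFinset_card', Set.toFinset_ofPred, natCast_card_filter,
    ← sum_sub_distrib]
  rw [sum_comm, mul_sum]
  refine sum_congr rfl fun T _ => ?_
  by_cases hT : IsSpanningTreeOf T G
  · simpa only [hT, true_and, if_true, mul_one] using hT.sum_ite_pathTraverses_sub s t v
  · simp [hT]

theorem PathTraverses.adj (h : PathTraverses T s t a b) : T.Adj a b := by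
  obtain ⟨-, -, ⟨⟨a', b'⟩, hadj⟩, -, hd⟩ := h
  obtain ⟨rfl, rfl⟩ := Prod.mk.inj hd
  exact hadj

theorem pathTraverses_of_reachable_deleteEdges (hst : T.Reachable s t)
    (htb : (T.deleteEdges {s(a, b)}).Reachable t b)
    (hnst : ¬(T.deleteEdges {s(a, b)}).Reachable s t) : PathTraverses T s t a b := by
  classical
  obtain ⟨p, hp⟩ := hst.some.toPath
  have hedge : s(a, b) ∈ p.edges := p.mem_edges_of_not_reachable_deleteEdges hnst
  obtain ⟨d, hd, hde⟩ := List.mem_map.mp (p.edges_eq_map_darts ▸ hedge)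
  -- Crossing `s(a, b)` from `b` to `a` would leave `s` joined to `b`, hence to `t`.
  rcases Sym2.eq_iff.mp hde with ⟨hda, hdb⟩ | ⟨hdb, -⟩
  · exact ⟨p, hp, d, hd, Prod.ext hda hdb⟩
  · have hsb := (hp.isTrail.reachable_deleteEdges_of_mem_darts hd).1
    rw [hde, hdb] at hsb
    exact absurd (hsb.trans htb.symm) hnst

theorem IsSpanningTreeOf.isSeparatingForest_deleteEdges (hT : IsSpanningTreeOf T G)
    (h : PathTraverses T s t a b) :
    G.IsSeparatingForest s t (T.deleteEdges {s(a, b)}) ∧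
      (T.deleteEdges {s(a, b)}).Reachable s a ∧ (T.deleteEdges {s(a, b)}).Reachable t b := by
  obtain ⟨p, hp, ⟨⟨a', b'⟩, hadj⟩, hd, hdab⟩ := h
  obtain ⟨rfl, rfl⟩ := Prod.mk.inj hdab
  obtain ⟨hsa, hbt⟩ := hp.isTrail.reachable_deleteEdges_of_mem_darts hd
  have hab : ¬(T.deleteEdges {s(a', b')}).Reachable a' b' :=
    isAcyclic_iff_forall_adj_isBridge.mp hT.2.isAcyclic hadj
  refine ⟨⟨(deleteEdges_le _).trans hT.1, hT.2.isAcyclic.anti (deleteEdges_le _),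
    fun hst => hab (hsa.symm.trans (hst.trans hbt.symm)), fun v => ?_⟩, hsa, hbt.symm⟩
  exact ((hT.2.connected a' v).reachable_deleteEdges_or).imp hsa.trans hbt.symm.trans

theorem SimpleGraph.IsSeparatingForest.isSpanningTreeOf_sup_edge
    (hF : G.IsSeparatingForest s t F) (hab : G.Adj a b) (hsa : F.Reachable s a)
    (htb : F.Reachable t b) :
    IsSpanningTreeOf (F ⊔ edge a b) G ∧ PathTraverses (F ⊔ edge a b) s t a b := by
  have hnab : ¬F.Reachable a b := fun h => hF.not_reachable (hsa.trans (h.trans htb.symm))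
  have hdel : (F ⊔ edge a b).deleteEdges {s(a, b)} = F :=
    sup_edge_deleteEdges fun h => hnab h.reachable
  have hadj : (F ⊔ edge a b).Adj a b := by simp [edge_adj, hab.ne]
  have hst : (F ⊔ edge a b).Reachable s t :=
    (hsa.mono le_sup_left).trans (hadj.reachable.trans (htb.mono le_sup_left).symm)
  have hconn : (F ⊔ edge a b).Connected := by
    refine (connected_iff_exists_forall_reachable _).mpr ⟨s, fun v => ?_⟩
    rcases hF.reachable_or v with hsv | htv
    · exact hsv.mono le_sup_left
    · exact hst.trans (htv.mono le_sup_left)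
  refine ⟨⟨sup_le hF.le ((edge_le_iff G).mpr (.inr hab)), hconn,
    hF.isAcyclic.sup_edge_of_not_reachable hnab⟩, ?_⟩
  exact pathTraverses_of_reachable_deleteEdges hst (by rwa [hdel])
    (by rw [hdel]; exact hF.not_reachable)

theorem ncard_pathTraverses_eq_ncard_isSeparatingForest (hab : G.Adj a b) :
    {T | IsSpanningTreeOf T G ∧ PathTraverses T s t a b}.ncard =
      {F | G.IsSeparatingForest s t F ∧ F.Reachable s a ∧ F.Reachable t b}.ncard := by
  refine Set.BijOn.ncard_eq (f := fun T => T.deleteEdges {s(a, b)}) (Set.InvOn.bijOn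
    (f' := (· ⊔ edge a b)) ⟨?_, ?_⟩ ?_ ?_)
  · exact fun T ⟨_, h⟩ => deleteEdges_sup_edge h.adj
  · exact fun F ⟨hF, hsa, htb⟩ =>
      sup_edge_deleteEdges fun h => hF.not_reachable (hsa.trans (h.reachable.trans htb.symm))
  · exact fun T ⟨hT, h⟩ => hT.isSeparatingForest_deleteEdges h
  · exact fun F ⟨hF, hsa, htb⟩ => hF.isSpanningTreeOf_sup_edge hab hsa htb

variable (G s t) in
noncomputable def SimpleGraph.forestPotential (x : V) : ℕ :=
  {F | G.IsSeparatingForest s t F ∧ F.Reachable s x}.ncard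

theorem SimpleGraph.forestPotential_eq_add [Finite V] (x y : V) :
    G.forestPotential s t x =
      {F | G.IsSeparatingForest s t F ∧ F.Reachable s x ∧ F.Reachable s y}.ncard +
        {F | G.IsSeparatingForest s t F ∧ F.Reachable s x ∧ F.Reachable t y}.ncard := by
  rw [forestPotential, ← Set.ncard_union_eq]
  · congr 1
    ext F
    simp only [Set.mem_ofPred_eq, Set.mem_union]
    constructor
    · rintro ⟨hF, hx⟩
      exact (hF.reachable_or y).imp (⟨hF, hx, ·⟩) (⟨hF, hx, ·⟩)
    · rintro (⟨hF, hx, -⟩ | ⟨hF, hx, -⟩) <;> exact ⟨hF, hx⟩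
  · exact Set.disjoint_left.mpr fun F ⟨hF, _, hsy⟩ ⟨_, _, hty⟩ =>
      hF.not_reachable (hsy.trans hty.symm)

theorem ncard_pathTraverses_sub_ncard_pathTraverses [Finite V] (hab : G.Adj a b) :
    ({T | IsSpanningTreeOf T G ∧ PathTraverses T s t a b}.ncard : ℤ) -
        {T | IsSpanningTreeOf T G ∧ PathTraverses T s t b a}.ncard =
      G.forestPotential s t a - G.forestPotential s t b := by
  have hcomm : {F | G.IsSeparatingForest s t F ∧ F.Reachable s b ∧ F.Reachable s a} =
      {F | G.IsSeparatingForest s t F ∧ F.Reachable s a ∧ F.Reachable s b} := by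
    ext; exact and_congr_right fun _ => and_comm
  rw [ncard_pathTraverses_eq_ncard_isSeparatingForest hab,
    ncard_pathTraverses_eq_ncard_isSeparatingForest hab.symm, forestPotential_eq_add a b,
    forestPotential_eq_add b a, hcomm]
  push_cast
  ring

end

theorem spanning_tree_flow_satisfies_kirchhoff_laws_general
    [Fintype V] [DecidableEq V]
    (G : SimpleGraph V) [DecidableRel G.Adj]
    (s t : V) (hst : s ≠ t)
    (N : ℕ) (hN : N = Set.ncard {T : SimpleGraph V | IsSpanningTreeOf T G})
    (hNpos : 0 < N)
    (Nst : V → V → ℕ)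
    (hNst : ∀ a b, Nst a b =
      Set.ncard {T : SimpleGraph V | IsSpanningTreeOf T G ∧ PathTraverses T s t a b})
    (f : V → V → ℝ)
    (hf : ∀ a b, f a b = ((Nst a b : ℝ) - (Nst b a : ℝ)) / (N : ℝ)) :
    -- (i) Kirchhoff's current law: unit flow from `s` to `t`
    (∀ v : V, ∑ b ∈ Finset.univ.filter (fun b => G.Adj v b), f v b =
      if v = s then 1 else if v = t then -1 else 0) ∧
    -- (ii) Kirchhoff's voltage law along every closed walk (unit resistances)
    (∀ v : V, ∀ w : G.Walk v v,
      (w.darts.map (fun d => f d.toProd.1 d.toProd.2)).sum = 0) := by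
  have hN0 : (N : ℝ) ≠ 0 := Nat.cast_ne_zero.mpr hNpos.ne'
  refine ⟨fun v => ?_, fun v w => ?_⟩
  · have hcur := sum_ncard_pathTraverses_sub G s t v
    simp only [← hNst, ← hN] at hcur
    have hsign : (((if v = s then 1 else 0) - if v = t then 1 else 0 : ℤ) : ℝ) =
        if v = s then 1 else if v = t then -1 else 0 := by
      split_ifs <;> simp_all
    simp only [hf, ← sum_div]
    rw [div_eq_iff hN0, ← hsign]
    exact_mod_cast hcur
  · have hpot : ∀ a b, G.Adj a b →
        f a b = (G.forestPotential s t a : ℝ) / N - (G.forestPotential s t b : ℝ) / N := by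
      intro a b hab
      rw [hf, hNst, hNst, ← sub_div]
      exact congrArg (· / (N : ℝ)) (mod_cast ncard_pathTraverses_sub_ncard_pathTraverses hab)
    rw [w.sum_map_darts_eq_sub hpot, sub_self]

theorem spanning_tree_flow_satisfies_kirchhoff_laws
    [Fintype V] [DecidableEq V]
    (G : SimpleGraph V) [DecidableRel G.Adj] (hG : G.Connected)
    (s t : V) (hst : s ≠ t)
    (N : ℕ) (hN : N = Set.ncard {T : SimpleGraph V | IsSpanningTreeOf T G})
    (hNpos : 0 < N)
    (Nst : V → V → ℕ)
    (hNst : ∀ a b, Nst a b =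
      Set.ncard {T : SimpleGraph V | IsSpanningTreeOf T G ∧ PathTraverses T s t a b})
    (f : V → V → ℝ)
    (hf : ∀ a b, f a b = ((Nst a b : ℝ) - (Nst b a : ℝ)) / (N : ℝ)) :
    -- (i) Kirchhoff's current law: unit flow from `s` to `t`
    (∀ v : V, ∑ b ∈ Finset.univ.filter (fun b => G.Adj v b), f v b =
      if v = s then 1 else if v = t then -1 else 0) ∧
    -- (ii) Kirchhoff's voltage law along every closed walk (unit resistances)
    (∀ v : V, ∀ w : G.Walk v v,
      (w.darts.map (fun d => f d.toProd.1 d.toProd.2)).sum = 0) :=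
  spanning_tree_flow_satisfies_kirchhoff_laws_general G s t hst N hN hNpos Nst hNst f hf
end

section
/- Let n ≥ 2, m ≥ 1 be integers and let D ≥ 1, λ₂ > 0, ε > 0, κ > 0 be reals with D ≤ log n and λ₂ ≥ 4/(n·D). Let L be a real n×n symmetric positive semidefinite matrix, and let x, x̃ ∈ ℝⁿ be vectors with xᵀ𝟙 = x̃ᵀ𝟙 = 0. Set η := κ·ε / (3·√(m·n·log n)·D) and assume: (i) λ₂·‖y‖_∞² ≤ yᵀ L y for y := x̃ − x (lower norm-equivalence bound); (ii) (x̃ − x)ᵀ L (x̃ − x) ≤ η² · xᵀ L x (relative solver error ‖x̃ − x‖_L ≤ η‖x‖_L); (iii) xᵀ L x ≤ 4m · ‖x‖_∞² (upper norm-equivalence bound with vol(G) = 2m); and (iv) ‖x‖_∞ ≤ D. Then ‖x̃ − x‖_∞ ≤ κ·ε/3. -/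
/-! With `y = x̃ - x`, the hypotheses chain to
`λ₂ ‖y‖∞² ≤ ‖y‖_L² ≤ η² ‖x‖_L² ≤ 4 m η² ‖x‖∞² ≤ 4 m η² D²`.
Dividing by `λ₂ ≥ 4 / (n D)` gives `‖y‖∞² ≤ m n D³ η² = (κ ε / 3)² · D / log n`,
and `D ≤ log n` finishes. -/

open Matrix

theorem mul_norm_sq_le_of_relative_energy_error {E : Type*} [SeminormedAddCommGroup E]
    (q : E → ℝ) {x y : E} {lam η C D : ℝ} (hC : 0 ≤ C)
    (hlower : lam * ‖y‖ ^ 2 ≤ q y) (herr : q y ≤ η ^ 2 * q x)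
    (hupper : q x ≤ C * ‖x‖ ^ 2) (hxD : ‖x‖ ≤ D) :
    lam * ‖y‖ ^ 2 ≤ η ^ 2 * (C * D ^ 2) := by
  have hxD2 : ‖x‖ ^ 2 ≤ D ^ 2 := pow_le_pow_left₀ (norm_nonneg x) hxD 2
  calc lam * ‖y‖ ^ 2 ≤ η ^ 2 * q x := hlower.trans herr
    _ ≤ η ^ 2 * (C * D ^ 2) := by gcongr; exact hupper.trans (by gcongr)

theorem sq_le_of_div_le_of_mul_sq_le {c N lam t B : ℝ} (hN : 0 < N) (hlam : c / N ≤ lam)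
    (ht : lam * t ^ 2 ≤ B) : c * t ^ 2 ≤ N * B := by
  have : c / N * t ^ 2 ≤ B := (mul_le_mul_of_nonneg_right hlam (sq_nonneg t)).trans ht
  rw [div_mul_eq_mul_div, div_le_iff₀ hN] at this
  linarith

theorem sq_div_sqrt_mul_le {a l D c : ℝ} (ha : 0 ≤ a) (hD : 0 < D) (hDl : D ≤ l) :
    (c / (3 * √(a * l) * D)) ^ 2 * (a * D ^ 3) ≤ (c / 3) ^ 2 := by
  have hl : 0 < l := hD.trans_le hDl
  rcases ha.eq_or_lt with rfl | ha
  · simp only [zero_mul, mul_zero]; positivity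
  rw [div_pow, mul_pow, mul_pow, Real.sq_sqrt (by positivity)]
  calc c ^ 2 / (3 ^ 2 * (a * l) * D ^ 2) * (a * D ^ 3) = (c / 3) ^ 2 * (D / l) := by
        field_simp
    _ ≤ (c / 3) ^ 2 := mul_le_of_le_one_right (sq_nonneg _) ((div_le_one hl).mpr hDl)

theorem solver_error_propagation_general (n m : ℕ)
    (D lam2 ε κ : ℝ)
    (hD1 : 1 ≤ D) (hε : 0 < ε) (hκ : 0 < κ)
    (hDlog : D ≤ Real.log n)
    (hlam2 : 4 / ((n : ℝ) * D) ≤ lam2)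
    (L : Matrix (Fin n) (Fin n) ℝ)
    (x xt : Fin n → ℝ)
    (η : ℝ)
    (hη : η = κ * ε / (3 * Real.sqrt ((m : ℝ) * (n : ℝ) * Real.log n) * D))
    (hlower : lam2 * ‖xt - x‖ ^ 2 ≤ (xt - x) ⬝ᵥ L.mulVec (xt - x))
    (hsolver : (xt - x) ⬝ᵥ L.mulVec (xt - x) ≤ η ^ 2 * (x ⬝ᵥ L.mulVec x))
    (hupper : x ⬝ᵥ L.mulVec x ≤ 4 * (m : ℝ) * ‖x‖ ^ 2)
    (hxD : ‖x‖ ≤ D) :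
    ‖xt - x‖ ≤ κ * ε / 3 := by
  have hD : 0 < D := by linarith
  have hnD : 0 < (n : ℝ) * D := by
    have : 1 < (n : ℝ) := (Real.log_pos_iff n.cast_nonneg).mp (by linarith)
    positivity
  have henergy := mul_norm_sq_le_of_relative_energy_error (fun v ↦ v ⬝ᵥ L.mulVec v)
    (by positivity : (0 : ℝ) ≤ 4 * m) hlower hsolver hupper hxD
  have hgap := sq_le_of_div_le_of_mul_sq_le hnD hlam2 henergy
  have herr : ‖xt - x‖ ^ 2 ≤ (κ * ε / 3) ^ 2 := calc
    ‖xt - x‖ ^ 2 ≤ η ^ 2 * ((m * n) * D ^ 3) := by linear_combination hgap / 4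
    _ ≤ (κ * ε / 3) ^ 2 := hη ▸ sq_div_sqrt_mul_le (by positivity) hD hDlog
  exact (pow_le_pow_iff_left₀ (norm_nonneg _) (by positivity) two_ne_zero).mp herr

theorem solver_error_propagation (n m : ℕ) (hn : 2 ≤ n) (hm : 1 ≤ m)
    (D lam2 ε κ : ℝ)
    (hD1 : 1 ≤ D) (hlam2pos : 0 < lam2) (hε : 0 < ε) (hκ : 0 < κ)
    (hDlog : D ≤ Real.log n)
    (hlam2 : 4 / ((n : ℝ) * D) ≤ lam2)
    (L : Matrix (Fin n) (Fin n) ℝ)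
    (hsym : L.IsSymm) (hpsd : L.PosSemidef)
    (x xt : Fin n → ℝ)
    (hx1 : (∑ i, x i) = 0) (hxt1 : (∑ i, xt i) = 0)
    (η : ℝ)
    (hη : η = κ * ε / (3 * Real.sqrt ((m : ℝ) * (n : ℝ) * Real.log n) * D))
    (hlower : lam2 * ‖xt - x‖ ^ 2 ≤ (xt - x) ⬝ᵥ L.mulVec (xt - x))
    (hsolver : (xt - x) ⬝ᵥ L.mulVec (xt - x) ≤ η ^ 2 * (x ⬝ᵥ L.mulVec x))
    (hupper : x ⬝ᵥ L.mulVec x ≤ 4 * (m : ℝ) * ‖x‖ ^ 2)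
    (hxD : ‖x‖ ≤ D) :
    ‖xt - x‖ ≤ κ * ε / 3 :=
  solver_error_propagation_general n m D lam2 ε κ hD1 hε hκ hDlog hlam2 L x xt η hη hlower hsolver
    hupper hxD
end
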